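/- arXiv:2310.07746 — 4 statements merged into one kernel-verified Lean document; each statement's English description precedes it below -/
import Mathlib

section
/- Let m be a positive integer and let D₁, D₂ be discriminants with D₁ ≡ D₂ (mod (2m)²). Then ψ_{D₁}(m) = ψ_{D₂}(m). -/
open scoped BigOperators Real

/-- An integer is a *discriminant* if it is congruent to 0 or 1 mod 4. -/
def IsDiscriminant (D : ℤ) : Prop := D % 4 = 0 ∨ D % 4 = 1

/-- A *fundamental discriminant* (including `1`, for positive square discriminants). -/
def IsFundamentalDiscriminant (d : ℤ) : Prop :=
  (Squarefree d ∧ d % 4 = 1) ∨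
    (∃ m : ℤ, d = 4 * m ∧ Squarefree m ∧ (m % 4 = 2 ∨ m % 4 = 3))

/-- The Kronecker symbol `(d | m)` for `m > 0`, defined by complete multiplicativity in `m`
from the Jacobi symbol on the odd part and the standard value at `2`. -/
noncomputable def kron (d : ℤ) (m : ℕ) : ℤ :=
  (if d % 2 = 0 then 0 else if d % 8 = 1 ∨ d % 8 = 7 then 1 else -1) ^ (m.factorization 2) *
    jacobiSym d (m / 2 ^ (m.factorization 2))

-- `ψ_D(m) = (d | m / gcd(m, ℓ))` where `D = d ℓ²` with `d` a fundamental discriminant,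
-- with the convention `ψ_0(m) = 1`.
open Classical in
noncomputable def psi (D : ℤ) (m : ℕ) : ℤ :=
  if D = 0 then 1
  else if h : ∃ p : ℤ × ℕ, IsFundamentalDiscriminant p.1 ∧ D = p.1 * (p.2 : ℤ) ^ 2 then
    kron h.choose.1 (m / m.gcd h.choose.2)
  else 0

/-- `ψ̄_t(m) = φ(m²)⁻¹ ∑_{n mod m², (n,m)=1} ψ_{t²-4n}(m)`. -/
noncomputable def psibar (t : ℤ) (m : ℕ) : ℝ :=
  (Nat.totient (m ^ 2) : ℝ)⁻¹ *
    ∑ n ∈ Finset.range (m ^ 2), if Nat.gcd n m = 1 then (psi (t ^ 2 - 4 * n) m : ℝ) else 0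

/-- `L(1, ψ_D) = ∑_{m ≥ 1} ψ_D(m)/m`, as the limit of the partial sums
(the series is in general only conditionally convergent). -/
noncomputable def LpsiOne (D : ℤ) : ℝ :=
  Filter.limUnder Filter.atTop (fun X : ℕ => ∑ m ∈ Finset.Icc 1 X, (psi D m : ℝ) / m)

/-- `L(1, ψ̄_t) = ∑_{m ≥ 1} ψ̄_t(m)/m`. -/
noncomputable def LpsibarOne (t : ℤ) : ℝ := ∑' m : ℕ, psibar t (m + 1) / (m + 1)

/-!
Write `D = d ℓ²` with `d` fundamental. By multiplicativity of the Kronecker symbol,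
`ψ_D(m) = ∏_{p^a ∥ m} (d | p) ^ (a - min a (v_p ℓ))`, so it suffices to compare the local
factors of `D₁ = d₁ ℓ₁²` and `D₂ = d₂ ℓ₂²`. Suppose `e = v_p ℓ₁ ≤ v_p ℓ₂ = e + k` and `e < a`.
Cancelling `p^(2e)` from `D₁ ≡ D₂ (mod 4 p^(2a))` leaves `d₁ u₁² ≡ p^(2k) d₂ u₂² (mod 4 p²)` with
`p ∤ u₁ u₂`. A fundamental discriminant is not divisible by `p²` for odd `p`, and is `≡ 1 (mod 4)`
or `≡ 8, 12 (mod 16)`; this forces `k = 0` and `d₁ ≡ d₂` modulo `p` (resp. `8`), which is what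
`(d | p)` depends on. The discriminant `0` is treated as `(2m)² = 1 · (2m)²`.
-/

theorem Int.exists_sq_eq_eight_mul_add_one {u : ℤ} (hu : ¬ 2 ∣ u) : ∃ s, u ^ 2 = 8 * s + 1 := by
  obtain ⟨k, rfl⟩ : ∃ k, u = 2 * k + 1 := ⟨u / 2, by omega⟩
  obtain ⟨j, hj⟩ := Int.even_mul_succ_self k
  exact ⟨j, by linear_combination 4 * hj⟩

theorem Int.exists_squarefree_mul_sq (D : ℤ) : ∃ (s : ℤ) (b : ℕ), Squarefree s ∧ D = s * b ^ 2 := by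
  obtain ⟨a, b, hab, ha⟩ := Nat.sq_mul_squarefree D.natAbs
  rcases Int.natAbs_eq D with hD | hD
  · exact ⟨a, b, Int.squarefree_natCast.mpr ha, by rw [hD, ← hab]; push_cast; ring⟩
  · refine ⟨-a, b, ?_, by rw [hD, ← hab]; push_cast; ring⟩
    rwa [← Int.squarefree_natAbs, Int.natAbs_neg, Int.natAbs_natCast]

theorem isFundamentalDiscriminant_one : IsFundamentalDiscriminant 1 :=
  Or.inl ⟨squarefree_one, rfl⟩

theorem IsDiscriminant.exists_isFundamentalDiscriminant {D : ℤ} (hD : IsDiscriminant D) :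
    ∃ p : ℤ × ℕ, IsFundamentalDiscriminant p.1 ∧ D = p.1 * (p.2 : ℤ) ^ 2 := by
  obtain ⟨s, b, hs, rfl⟩ := Int.exists_squarefree_mul_sq D
  have hs4 : ¬ (4 : ℤ) ∣ s := fun ⟨k, hk⟩ =>
    (show ¬ IsUnit (2 : ℤ) by decide) (hs 2 ⟨k, by rw [hk]; ring⟩)
  by_cases hs1 : s % 4 = 1
  · exact ⟨(s, b), Or.inl ⟨hs, hs1⟩, rfl⟩
  -- `s ≡ 2, 3 (mod 4)`, so `b` must be even for `s b²` to be a discriminant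
  obtain ⟨c, rfl⟩ : 2 ∣ b := by
    by_contra hb
    obtain ⟨t, ht⟩ := Int.exists_sq_eq_eight_mul_add_one (u := b) (by exact_mod_cast hb)
    rw [ht, IsDiscriminant] at hD
    ring_nf at hD
    omega
  exact ⟨(4 * s, c), Or.inr ⟨s, rfl, hs, by omega⟩, by push_cast; ring⟩

theorem kron_one_left (n : ℕ) : kron 1 n = 1 := by
  norm_num [kron, jacobiSym.one_left]

theorem kron_one_right (d : ℤ) : kron d 1 = 1 := by
  simp [kron]

theorem kron_two (d : ℤ) :
    kron d 2 = if d % 2 = 0 then 0 else if d % 8 = 1 ∨ d % 8 = 7 then 1 else -1 := by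
  simp [kron, Nat.Prime.factorization_self Nat.prime_two]

theorem kron_two_congr {d₁ d₂ : ℤ} (h : d₁ ≡ d₂ [ZMOD 8]) : kron d₁ 2 = kron d₂ 2 := by
  rw [kron_two, kron_two, show d₁ % 8 = d₂ % 8 from h, show d₁ % 2 = d₂ % 2 by
    unfold Int.ModEq at h; omega]

theorem kron_prime_of_ne_two (d : ℤ) {p : ℕ} (hp : p.Prime) (hp2 : p ≠ 2) :
    kron d p = jacobiSym d p := by
  have : p.factorization 2 = 0 := by simp [hp.factorization, hp2]
  simp [kron, this]

theorem kron_mul (d : ℤ) {x y : ℕ} (hx : x ≠ 0) (hy : y ≠ 0) :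
    kron d (x * y) = kron d x * kron d y := by
  rw [kron, kron, kron, Nat.ordCompl_mul, Nat.factorization_mul hx hy, Finsupp.add_apply, pow_add,
    jacobiSym.mul_right' d (Nat.ordCompl_pos 2 hx).ne' (Nat.ordCompl_pos 2 hy).ne']
  ring

theorem kron_eq_prod_of_primeFactors_subset (d : ℤ) {n : ℕ} (hn : n ≠ 0) {s : Finset ℕ}
    (hs : n.primeFactors ⊆ s) : kron d n = ∏ p ∈ s, kron d p ^ n.factorization p := by
  have hmul : ∀ x y : ℕ, x.Coprime y → kron d (x * y) = kron d x * kron d y := by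
    intro x y hxy
    rcases eq_or_ne x 0 with rfl | hx
    · rw [(Nat.coprime_zero_left _).mp hxy, kron_one_right, mul_one, mul_one]
    rcases eq_or_ne y 0 with rfl | hy
    · rw [(Nat.coprime_zero_right _).mp hxy, one_mul, kron_one_right, one_mul]
    exact kron_mul d hx hy
  have hpow : ∀ p k : ℕ, p.Prime → kron d (p ^ k) = kron d p ^ k := by
    intro p k hp
    induction k with
    | zero => simp [kron_one_right]
    | succ k ih => rw [pow_succ, kron_mul d (pow_ne_zero k hp.ne_zero) hp.ne_zero, ih, pow_succ]
  rw [Nat.multiplicative_factorization _ hmul (kron_one_right d) hn,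
    Finsupp.prod_congr (g2 := fun p k => kron d p ^ k)
      fun p hp => hpow p _ (Nat.prime_of_mem_primeFactors (by simpa using hp)),
    Finsupp.prod_of_support_subset _ (s := s) (by rwa [Nat.support_factorization]) _
      fun _ _ => pow_zero _]

theorem kron_div_gcd_eq_prod (d : ℤ) {m ℓ : ℕ} (hm : m ≠ 0) (hℓ : ℓ ≠ 0) :
    kron d (m / m.gcd ℓ) = ∏ p ∈ m.primeFactors,
      kron d p ^ (m.factorization p - min (m.factorization p) (ℓ.factorization p)) := by
  have hdvd : m / m.gcd ℓ ∣ m := Nat.div_dvd_of_dvd (Nat.gcd_dvd_left m ℓ)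
  rw [kron_eq_prod_of_primeFactors_subset d (ne_zero_of_dvd_ne_zero hm hdvd)
    (Nat.primeFactors_mono hdvd hm), Nat.factorization_div (Nat.gcd_dvd_left m ℓ),
    Nat.factorization_gcd hm hℓ]
  rfl

theorem eq_zero_and_jacobiSym_eq_of_sq_dvd {p : ℕ} (hp : p.Prime) {d₁ d₂ u₁ u₂ : ℤ} {k : ℕ}
    (hd₁ : ¬ (p : ℤ) ^ 2 ∣ d₁) (hu₁ : ¬ (p : ℤ) ∣ u₁) (hu₂ : ¬ (p : ℤ) ∣ u₂)
    (h : (p : ℤ) ^ 2 ∣ d₁ * u₁ ^ 2 - (p : ℤ) ^ (2 * k) * (d₂ * u₂ ^ 2)) :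
    k = 0 ∧ jacobiSym d₁ p = jacobiSym d₂ p := by
  have hpZ : Prime (p : ℤ) := Nat.prime_iff_prime_int.mp hp
  have hcop : ∀ {u : ℤ}, ¬ (p : ℤ) ∣ u → IsCoprime (p : ℤ) u := fun hu =>
    (Irreducible.coprime_iff_not_dvd hpZ.irreducible).mpr hu
  rcases k with _ | k
  · refine ⟨rfl, ?_⟩
    have hmod : d₁ * u₁ ^ 2 ≡ d₂ * u₂ ^ 2 [ZMOD p] :=
      (Int.modEq_iff_dvd.mpr (by simpa using (dvd_pow_self _ two_ne_zero).trans h)).symm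
    have hsq : ∀ {u : ℤ}, ¬ (p : ℤ) ∣ u → ∀ d : ℤ, jacobiSym (d * u ^ 2) p = jacobiSym d p := by
      intro u hu d
      rw [jacobiSym.mul_left, jacobiSym.sq_one' (Int.isCoprime_iff_gcd_eq_one.mp (hcop hu).symm),
        mul_one]
    rw [← hsq hu₁ d₁, ← hsq hu₂ d₂, jacobiSym.mod_left' hmod]
  · -- both sides of the congruence but `d₁ u₁²` are divisible by `p²`
    refine absurd (((hcop hu₁).pow (m := 2) (n := 2)).dvd_of_dvd_mul_right ?_) hd₁
    have : (p : ℤ) ^ 2 ∣ (p : ℤ) ^ (2 * (k + 1)) * (d₂ * u₂ ^ 2) :=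
      (pow_dvd_pow _ (by omega)).mul_right _
    simpa using dvd_add h this

namespace IsFundamentalDiscriminant

theorem not_sq_dvd {d : ℤ} (hd : IsFundamentalDiscriminant d) {p : ℕ} (hp : p.Prime)
    (hp2 : p ≠ 2) : ¬ (p : ℤ) ^ 2 ∣ d := by
  have hpZ : Prime (p : ℤ) := Nat.prime_iff_prime_int.mp hp
  rcases hd with ⟨hs, -⟩ | ⟨n, rfl, hs, -⟩
  · exact fun h => hpZ.not_isUnit (hs _ (by rwa [← sq]))
  · have hp4 : IsCoprime ((p : ℤ) ^ 2) (2 ^ 2) := by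
      refine ((Irreducible.coprime_iff_not_dvd hpZ.irreducible).mpr fun h2 => hp2 ?_).pow
      exact (Nat.prime_dvd_prime_iff_eq hp Nat.prime_two).mp (by exact_mod_cast h2)
    exact fun h => hpZ.not_isUnit
      (hs _ (by rw [← sq]; exact hp4.dvd_of_dvd_mul_left (by simpa using h)))

theorem eq_zero_and_modEq_of_sixteen_dvd {d₁ d₂ u₁ u₂ : ℤ} {k : ℕ}
    (hd₁ : IsFundamentalDiscriminant d₁) (hd₂ : IsFundamentalDiscriminant d₂)
    (hu₁ : ¬ 2 ∣ u₁) (hu₂ : ¬ 2 ∣ u₂) (h : 16 ∣ d₁ * u₁ ^ 2 - 2 ^ (2 * k) * (d₂ * u₂ ^ 2)) :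
    k = 0 ∧ d₁ ≡ d₂ [ZMOD 8] := by
  obtain ⟨s₁, hs₁⟩ := Int.exists_sq_eq_eight_mul_add_one hu₁
  obtain ⟨s₂, hs₂⟩ := Int.exists_sq_eq_eight_mul_add_one hu₂
  rw [hs₁, hs₂, pow_mul] at h
  rw [Int.ModEq]
  rcases hd₁ with ⟨-, h₁⟩ | ⟨m₁, rfl, -, h₁⟩ <;> rcases hd₂ with ⟨-, h₂⟩ | ⟨m₂, rfl, -, h₂⟩ <;>
    rcases k with _ | _ | k <;> ring_nf at h <;> omega

end IsFundamentalDiscriminant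

theorem pow_sub_min_eq_pow_sub_min {M : Type*} [Monoid M] {x y : M} {a e f : ℕ}
    (hxy : e < a → e ≤ f → e = f ∧ x = y) (hyx : f < a → f ≤ e → f = e ∧ y = x) :
    x ^ (a - min a e) = y ^ (a - min a f) := by
  wlog hef : e ≤ f generalizing x y e f
  · exact (this hyx hxy (by omega)).symm
  by_cases hea : e < a
  · obtain ⟨rfl, rfl⟩ := hxy hea hef
    rfl
  · rw [min_eq_left (by omega), min_eq_left (by omega), Nat.sub_self, pow_zero, pow_zero]

theorem factorization_eq_and_kron_eq_of_modEq {p a : ℕ} (hp : p.Prime) {d₁ d₂ : ℤ} {ℓ₁ ℓ₂ : ℕ}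
    (hd₁ : IsFundamentalDiscriminant d₁) (hd₂ : IsFundamentalDiscriminant d₂)
    (hℓ₁ : ℓ₁ ≠ 0) (hℓ₂ : ℓ₂ ≠ 0) (hlt : ℓ₁.factorization p < a)
    (hle : ℓ₁.factorization p ≤ ℓ₂.factorization p)
    (h : d₁ * ℓ₁ ^ 2 ≡ d₂ * ℓ₂ ^ 2 [ZMOD (2 * p ^ a) ^ 2]) :
    ℓ₁.factorization p = ℓ₂.factorization p ∧ kron d₁ p = kron d₂ p := by
  have hsplit : ∀ {ℓ : ℕ}, ℓ ≠ 0 →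
      (ℓ : ℤ) = p ^ ℓ.factorization p * (ordCompl[p] ℓ : ℕ) ∧ ¬ (p : ℤ) ∣ (ordCompl[p] ℓ : ℕ) :=
    fun hℓ => ⟨by exact_mod_cast (Nat.ordProj_mul_ordCompl_eq_self _ p).symm,
      fun hdvd => Nat.not_dvd_ordCompl hp hℓ (Int.natCast_dvd_natCast.mp hdvd)⟩
  obtain ⟨hℓ₁', hu₁⟩ := hsplit hℓ₁
  obtain ⟨hℓ₂', hu₂⟩ := hsplit hℓ₂
  set e := ℓ₁.factorization p
  obtain ⟨k, hk⟩ := Nat.exists_eq_add_of_le hle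
  set u₁ : ℤ := ((ordCompl[p] ℓ₁ : ℕ) : ℤ)
  set u₂ : ℤ := ((ordCompl[p] ℓ₂ : ℕ) : ℤ)
  -- cancel the common factor `p ^ (2 e)` from the congruence modulo `(2 p ^ a)²`
  have hcore : 4 * (p : ℤ) ^ 2 ∣ d₁ * u₁ ^ 2 - (p : ℤ) ^ (2 * k) * (d₂ * u₂ ^ 2) := by
    refine (mul_dvd_mul_iff_left (pow_ne_zero (2 * e) (Int.natCast_ne_zero.mpr hp.ne_zero))).mp ?_
    have hdiff : d₁ * ℓ₁ ^ 2 - d₂ * ℓ₂ ^ 2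
        = (p : ℤ) ^ (2 * e) * (d₁ * u₁ ^ 2 - (p : ℤ) ^ (2 * k) * (d₂ * u₂ ^ 2)) := by
      rw [hℓ₁', hℓ₂', hk]; ring
    rw [← hdiff, show (p : ℤ) ^ (2 * e) * (4 * p ^ 2) = (2 * p ^ (e + 1)) ^ 2 by ring]
    exact (pow_dvd_pow_of_dvd (mul_dvd_mul_left 2 (pow_dvd_pow _ hlt)) 2).trans h.symm.dvd
  rcases eq_or_ne p 2 with rfl | hp2
  · obtain ⟨rfl, h8⟩ := hd₁.eq_zero_and_modEq_of_sixteen_dvd hd₂ hu₁ hu₂ (by norm_num at hcore ⊢; exact hcore)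
    exact ⟨hk.symm, kron_two_congr h8⟩
  · obtain ⟨rfl, hJ⟩ := eq_zero_and_jacobiSym_eq_of_sq_dvd hp (hd₁.not_sq_dvd hp hp2) hu₁ hu₂
      ((dvd_mul_left _ 4).trans hcore)
    rw [kron_prime_of_ne_two d₁ hp hp2, kron_prime_of_ne_two d₂ hp hp2]
    exact ⟨hk.symm, hJ⟩

theorem kron_pow_sub_min_eq_of_modEq {p a : ℕ} (hp : p.Prime) {d₁ d₂ : ℤ} {ℓ₁ ℓ₂ : ℕ}
    (hd₁ : IsFundamentalDiscriminant d₁) (hd₂ : IsFundamentalDiscriminant d₂)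
    (hℓ₁ : ℓ₁ ≠ 0) (hℓ₂ : ℓ₂ ≠ 0) (h : d₁ * ℓ₁ ^ 2 ≡ d₂ * ℓ₂ ^ 2 [ZMOD (2 * p ^ a) ^ 2]) :
    kron d₁ p ^ (a - min a (ℓ₁.factorization p)) = kron d₂ p ^ (a - min a (ℓ₂.factorization p)) :=
  pow_sub_min_eq_pow_sub_min
    (fun hlt hle => factorization_eq_and_kron_eq_of_modEq hp hd₁ hd₂ hℓ₁ hℓ₂ hlt hle h)
    (fun hlt hle => factorization_eq_and_kron_eq_of_modEq hp hd₂ hd₁ hℓ₂ hℓ₁ hlt hle h.symm)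

theorem kron_div_gcd_eq_of_modEq {m : ℕ} (hm : m ≠ 0) {d₁ d₂ : ℤ} {ℓ₁ ℓ₂ : ℕ}
    (hd₁ : IsFundamentalDiscriminant d₁) (hd₂ : IsFundamentalDiscriminant d₂)
    (hℓ₁ : ℓ₁ ≠ 0) (hℓ₂ : ℓ₂ ≠ 0) (h : d₁ * ℓ₁ ^ 2 ≡ d₂ * ℓ₂ ^ 2 [ZMOD (2 * m) ^ 2]) :
    kron d₁ (m / m.gcd ℓ₁) = kron d₂ (m / m.gcd ℓ₂) := by
  rw [kron_div_gcd_eq_prod d₁ hm hℓ₁, kron_div_gcd_eq_prod d₂ hm hℓ₂]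
  refine Finset.prod_congr rfl fun p hp =>
    kron_pow_sub_min_eq_of_modEq (Nat.prime_of_mem_primeFactors hp) hd₁ hd₂ hℓ₁ hℓ₂ (h.of_dvd ?_)
  exact pow_dvd_pow_of_dvd (mul_dvd_mul_left 2 (by exact_mod_cast Nat.ordProj_dvd m p)) 2

theorem exists_psi_eq_kron {m : ℕ} (hm : m ≠ 0) {D : ℤ} (hD : IsDiscriminant D) :
    ∃ (d : ℤ) (ℓ : ℕ), IsFundamentalDiscriminant d ∧ ℓ ≠ 0 ∧
      D ≡ d * ℓ ^ 2 [ZMOD (2 * m) ^ 2] ∧ psi D m = kron d (m / m.gcd ℓ) := by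
  by_cases hD0 : D = 0
  · -- the convention `ψ_0 = 1` matches the decomposition `(2m)² = 1 · (2m)² ≡ 0`
    refine ⟨1, 2 * m, isFundamentalDiscriminant_one, by omega, ?_, ?_⟩
    · rw [hD0, Int.modEq_comm, Int.modEq_zero_iff_dvd]
      exact ⟨1, by push_cast; ring⟩
    · rw [psi, if_pos hD0, kron_one_left]
  · have hex := hD.exists_isFundamentalDiscriminant
    obtain ⟨hd, hDeq⟩ := hex.choose_spec
    refine ⟨hex.choose.1, hex.choose.2, hd, fun hℓ => hD0 (by rw [hDeq, hℓ]; simp),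
      by rw [← hDeq], ?_⟩
    rw [psi, if_neg hD0, dif_pos hex]

/-- If `D₁ ≡ D₂ (mod (2m)²)` are discriminants then `ψ_{D₁}(m) = ψ_{D₂}(m)`. -/
theorem psi_eq_of_congr_mod_sq (m : ℕ) (hm : 0 < m) (D₁ D₂ : ℤ)
    (hD₁ : IsDiscriminant D₁) (hD₂ : IsDiscriminant D₂)
    (hcong : D₁ ≡ D₂ [ZMOD (2 * (m : ℤ)) ^ 2]) :
    psi D₁ m = psi D₂ m := by
  obtain ⟨d₁, ℓ₁, hd₁, hℓ₁, hcong₁, hψ₁⟩ := exists_psi_eq_kron hm.ne' hD₁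
  obtain ⟨d₂, ℓ₂, hd₂, hℓ₂, hcong₂, hψ₂⟩ := exists_psi_eq_kron hm.ne' hD₂
  rw [hψ₁, hψ₂]
  exact kron_div_gcd_eq_of_modEq hm.ne' hd₁ hd₂ hℓ₁ hℓ₂ (hcong₁.symm.trans (hcong.trans hcong₂))
end

section
/- For each fixed t ∈ ℤ, the function m ↦ ψ̄_t(m) is multiplicative: if m₁, m₂ ∈ ℤ_{>0} with gcd(m₁,m₂) = 1, then ψ̄_t(m₁m₂) = ψ̄_t(m₁)·ψ̄_t(m₂). -/
open scoped BigOperators Real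

/-!
For a discriminant `D = p^a q` with `p ∤ q`, the value `ψ_D(p^e)` is `1` when `a ≥ 2e`
(`a ≥ 2e + 2` if `p = 2`), and otherwise depends only on `a` and on `q` modulo `p` (modulo `8`
if `p = 2`). Hence `ψ_D(m)` depends only on `D mod 4m²`. Together with the multiplicativity of
`ψ_D`, this makes the summand `n ↦ ψ_{t²-4n}(m)` of `ψ̄_t(m)` (for `n` prime to `m`)
`m²`-periodic in `n` and multiplicative in `m`. The Chinese remainder theorem then splits the sum
over `n mod (m₁m₂)²` into the product of the sums mod `m₁²` and mod `m₂²`, and `φ` is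
multiplicative.
-/

open Finset ZMod

lemma kron_eq_χ₈_mul_jacobiSym (d : ℤ) (m : ℕ) :
    kron d m = χ₈ d ^ m.factorization 2 * jacobiSym d (m / 2 ^ m.factorization 2) := by
  rw [kron, χ₈_int_eq_if_mod_eight]

lemma kron_mul_s2 (d : ℤ) {a b : ℕ} (ha : a ≠ 0) (hb : b ≠ 0) :
    kron d (a * b) = kron d a * kron d b := by
  have hodd : a * b / 2 ^ (a * b).factorization 2
      = a / 2 ^ a.factorization 2 * (b / 2 ^ b.factorization 2) := by
    rw [Nat.factorization_mul ha hb, Finsupp.add_apply, pow_add,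
      Nat.div_mul_div_comm (Nat.ordProj_dvd a 2) (Nat.ordProj_dvd b 2)]
  rw [kron_eq_χ₈_mul_jacobiSym, kron_eq_χ₈_mul_jacobiSym, kron_eq_χ₈_mul_jacobiSym, hodd,
    jacobiSym.mul_right' d (Nat.ordCompl_pos 2 ha).ne' (Nat.ordCompl_pos 2 hb).ne',
    Nat.factorization_mul ha hb, Finsupp.add_apply, pow_add]
  ring

lemma kron_two_pow (d : ℤ) (e : ℕ) : kron d (2 ^ e) = χ₈ d ^ e := by
  simp [kron_eq_χ₈_mul_jacobiSym, Nat.prime_two.factorization_pow]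

lemma kron_prime_pow {p : ℕ} [Fact p.Prime] (hp2 : p ≠ 2) (d : ℤ) (e : ℕ) :
    kron d (p ^ e) = legendreSym p d ^ e := by
  have hp2' : (p ^ e).factorization 2 = 0 := by
    simp [Nat.Prime.factorization_pow Fact.out, hp2]
  rw [kron_eq_χ₈_mul_jacobiSym, hp2', pow_zero, one_mul, pow_zero, Nat.div_one,
    jacobiSym.pow_right, jacobiSym.legendreSym.to_jacobiSym]

namespace Int

variable {p : ℕ} {q : ℤ}

lemma exists_eq_pow_mul_and_not_dvd (hp : p.Prime) {D : ℤ} (h0 : D ≠ 0) :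
    ∃ (a : ℕ) (q : ℤ), D = p ^ a * q ∧ ¬ (p : ℤ) ∣ q :=
  ⟨_, (Int.finiteMultiplicity_iff.2 ⟨by simpa using hp.ne_one, h0⟩)
    |>.exists_eq_pow_mul_and_not_dvd⟩

lemma pow_dvd_pow_mul_iff_le (hp : p.Prime) (hq : ¬ (p : ℤ) ∣ q) {a k : ℕ} :
    (p : ℤ) ^ k ∣ p ^ a * q ↔ k ≤ a := by
  refine ⟨fun h => ?_, fun h => (pow_dvd_pow _ h).mul_right q⟩
  by_contra! hak
  have hp0 : (p : ℤ) ^ a ≠ 0 := pow_ne_zero _ (by exact_mod_cast hp.ne_zero)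
  have : (p : ℤ) ^ a * p ∣ p ^ a * q := (pow_dvd_pow _ hak).trans h
  exact hq ((mul_dvd_mul_iff_left hp0).1 this)

lemma eq_and_eq_of_pow_mul_eq_pow_mul (hp : p.Prime) {r : ℤ} (hq : ¬ (p : ℤ) ∣ q)
    (hr : ¬ (p : ℤ) ∣ r) {a b : ℕ} (h : (p : ℤ) ^ a * q = p ^ b * r) :
    a = b ∧ q = r := by
  have hab : a = b := le_antisymm ((pow_dvd_pow_mul_iff_le hp hr).1 ⟨q, h.symm⟩)
    ((pow_dvd_pow_mul_iff_le hp hq).1 ⟨r, h⟩)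
  subst hab
  exact ⟨rfl, mul_left_cancel₀ (pow_ne_zero _ (by exact_mod_cast hp.ne_zero)) h⟩

lemma exists_eq_pow_mul_of_modEq (hp : p.Prime) {k : ℕ} {D D' : ℤ}
    (hD : ¬ (p : ℤ) ^ k ∣ D) (h : D ≡ D' [ZMOD p ^ k]) :
    ∃ (a : ℕ) (q q' : ℤ), a < k ∧ ¬ (p : ℤ) ∣ q ∧ ¬ (p : ℤ) ∣ q' ∧
      D = p ^ a * q ∧ D' = p ^ a * q' ∧ q ≡ q' [ZMOD p ^ (k - a)] := by
  obtain ⟨a, q, rfl, hq⟩ :=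
    exists_eq_pow_mul_and_not_dvd hp (D := D) (by rintro rfl; exact hD (dvd_zero _))
  have hak : a < k := by
    by_contra! hka
    exact hD ((pow_dvd_pow_mul_iff_le hp hq).2 hka)
  obtain ⟨c, hc⟩ := Int.modEq_iff_dvd.1 h
  have hD' : D' = p ^ a * (q + p ^ (k - a) * c) := by
    rw [mul_add, ← mul_assoc, ← pow_add, Nat.add_sub_cancel' hak.le, ← hc]
    ring
  refine ⟨a, q, _, hak, hq, fun hq' => hq ?_, rfl, hD', Int.modEq_iff_dvd.2 ⟨c, by ring⟩⟩
  have : (p : ℤ) ∣ p ^ (k - a) * c := (dvd_pow_self _ (by omega)).mul_right c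
  simpa using dvd_sub hq' this

end Int

lemma IsDiscriminant.sq_sub_four_mul (t c : ℤ) : IsDiscriminant (t ^ 2 - 4 * c) := by
  rcases Int.even_or_odd t with ⟨s, rfl⟩ | ht
  · have : (s + s) ^ 2 = 4 * (s * s) := by ring
    left; omega
  · have := Int.sq_mod_four_eq_one_of_odd ht
    right; omega

lemma IsDiscriminant.exists_fundamental {D : ℤ} (hD : IsDiscriminant D) (h0 : D ≠ 0) :
    ∃ p : ℤ × ℕ, IsFundamentalDiscriminant p.1 ∧ D = p.1 * (p.2 : ℤ) ^ 2 := by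
  obtain ⟨a, b, hab, ha⟩ := Nat.sq_mul_squarefree D.natAbs
  have hDd : D = D.sign * a * (b : ℤ) ^ 2 := by
    conv_lhs => rw [← Int.sign_mul_natAbs D, ← hab]
    push_cast; ring
  have hd : Squarefree (D.sign * a) := by
    rwa [← Int.squarefree_natAbs, Int.natAbs_mul, Int.natAbs_sign_of_ne_zero h0, one_mul,
      Int.natAbs_natCast]
  set d := D.sign * (a : ℤ)
  have hd4 : ¬ (4 : ℤ) ∣ d := fun h4 =>
    absurd (Int.isUnit_iff.1 (hd 2 (by simpa using h4))) (by decide)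
  by_cases h1 : d % 4 = 1
  · exact ⟨(d, b), Or.inl ⟨hd, h1⟩, hDd⟩
  obtain ⟨c, rfl⟩ : Even b := by
    by_contra hb
    have := Int.sq_mod_four_eq_one_of_odd (Int.odd_coe_nat b |>.2 (Nat.not_even_iff_odd.1 hb))
    have hmod : D % 4 = d % 4 := by rw [hDd, Int.mul_emod, this, mul_one, Int.emod_emod_of_dvd]; rfl
    rcases hD with h | h <;> omega
  exact ⟨(4 * d, c), Or.inr ⟨d, rfl, hd, by omega⟩, by rw [hDd]; push_cast; ring⟩

lemma IsFundamentalDiscriminant.not_mul_self_dvd {d : ℤ} (hd : IsFundamentalDiscriminant d)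
    {p : ℕ} (hp : p.Prime) (hp2 : p ≠ 2) : ¬ (p : ℤ) * p ∣ d := by
  have hpZ := Nat.prime_iff_prime_int.1 hp
  intro hpp
  rcases hd with ⟨hsf, -⟩ | ⟨m, rfl, hsf, -⟩
  · exact hpZ.not_isUnit (hsf _ hpp)
  · have hp4 : ¬ (p : ℤ) ∣ 4 := fun h => hp2 <|
      (Nat.prime_dvd_prime_iff_eq hp Nat.prime_two).1 <|
        hp.dvd_of_dvd_pow (n := 2) (by exact_mod_cast h)
    rw [← sq] at hpp
    exact hpZ.not_isUnit (hsf _ (by simpa [sq] using hpZ.pow_dvd_of_dvd_mul_left 2 hp4 hpp))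

lemma Nat.pow_div_gcd_pow_mul {p w : ℕ} (hp : p.Prime) (hw : ¬ p ∣ w) (e k : ℕ) :
    p ^ e / Nat.gcd (p ^ e) (p ^ k * w) = p ^ (e - k) := by
  rw [Nat.Coprime.gcd_mul_right_cancel_right _ ((hp.coprime_iff_not_dvd.2 hw).symm.pow_right e)]
  rcases le_total e k with h | h
  · rw [Nat.gcd_eq_left (pow_dvd_pow p h), Nat.div_self (pow_pos hp.pos e),
      Nat.sub_eq_zero_of_le h, pow_zero]
  · rw [Nat.gcd_eq_right (pow_dvd_pow p h), Nat.pow_div h hp.pos]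

lemma psi_zero (m : ℕ) : psi 0 m = 1 := by
  simp [psi]

lemma psi_mul (D : ℤ) {a b : ℕ} (ha : a ≠ 0) (hb : b ≠ 0) (hab : a.Coprime b) :
    psi D (a * b) = psi D a * psi D b := by
  unfold psi
  split_ifs with h0 hex
  · simp
  · set l := hex.choose.2
    have hquot : ∀ {n : ℕ}, n ≠ 0 → n / n.gcd l ≠ 0 := fun hn =>
      (Nat.div_pos (Nat.gcd_le_left l (Nat.pos_of_ne_zero hn))
        (Nat.gcd_pos_of_pos_left l (Nat.pos_of_ne_zero hn))).ne'
    rw [Nat.gcd_comm, Nat.Coprime.gcd_mul l hab, Nat.gcd_comm l a, Nat.gcd_comm l b,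
      ← Nat.div_mul_div_comm (Nat.gcd_dvd_left a l) (Nat.gcd_dvd_left b l),
      kron_mul_s2 _ (hquot ha) (hquot hb)]
  · simp

lemma exists_psi_prime_pow_eq_kron {D : ℤ} (hD : IsDiscriminant D) (h0 : D ≠ 0) {p : ℕ}
    (hp : p.Prime) :
    ∃ (d : ℤ) (k w : ℕ), IsFundamentalDiscriminant d ∧ ¬ p ∣ w ∧
      D = p ^ (2 * k) * (d * w ^ 2) ∧ ∀ e, psi D (p ^ e) = kron d (p ^ (e - k)) := by
  have hex := hD.exists_fundamental h0
  obtain ⟨hd, hDdl⟩ := hex.choose_spec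
  have hl : hex.choose.2 ≠ 0 := by
    rintro h
    simp [h] at hDdl
    exact h0 hDdl
  obtain ⟨k, w, hw, hlkw⟩ := Nat.exists_eq_pow_mul_and_not_dvd hl p hp.ne_one
  refine ⟨_, k, w, hd, hw, hDdl.trans (by rw [hlkw]; push_cast; ring), fun e => ?_⟩
  rw [psi, if_neg h0, dif_pos hex, hlkw, Nat.pow_div_gcd_pow_mul hp hw]

section OddPrime

variable {p : ℕ} [Fact p.Prime] {D q : ℤ} {a : ℕ}

lemma psi_prime_pow_of_ne_two (hp2 : p ≠ 2) (hD : IsDiscriminant D) (hq : ¬ (p : ℤ) ∣ q)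
    (hDq : D = p ^ a * q) (e : ℕ) :
    psi D (p ^ e) =
      if 2 * e ≤ a then 1 else if Odd a then 0 else legendreSym p q ^ (e - a / 2) := by
  have hp : p.Prime := Fact.out
  have h0 : D ≠ 0 := hDq ▸ mul_ne_zero (pow_ne_zero _ (by exact_mod_cast hp.ne_zero))
    (by rintro rfl; exact hq (dvd_zero _))
  obtain ⟨d, k, w, hd, hw, hDdw, hψ⟩ := exists_psi_prime_pow_eq_kron hD h0 hp
  have hpZ := Nat.prime_iff_prime_int.1 hp
  have hw' : ¬ (p : ℤ) ∣ w := by exact_mod_cast hw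
  rw [hψ, kron_prime_pow hp2]
  by_cases hpd : (p : ℤ) ∣ d
  · obtain ⟨d₀, rfl⟩ := hpd
    have hd₀ : ¬ (p : ℤ) ∣ d₀ := fun h => hd.not_mul_self_dvd hp hp2 (mul_dvd_mul_left _ h)
    have hd₀w : ¬ (p : ℤ) ∣ d₀ * w ^ 2 := fun h =>
      (hpZ.dvd_or_dvd h).elim hd₀ fun h => hw' (hpZ.dvd_of_dvd_pow h)
    obtain ⟨rfl, -⟩ := Int.eq_and_eq_of_pow_mul_eq_pow_mul hp hq hd₀w
      (hDq.symm.trans (hDdw.trans (by ring)) : (p : ℤ) ^ a * q = p ^ (2 * k + 1) * (d₀ * w ^ 2))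
    have hleg : legendreSym p (p * d₀) = 0 := by
      rw [legendreSym.eq_zero_iff]
      simp
    split_ifs with he
    · rw [Nat.sub_eq_zero_of_le (by omega), pow_zero]
    · rw [hleg, zero_pow (by omega)]
    · exact absurd (odd_two_mul_add_one k) ‹_›
  · have hdw : ¬ (p : ℤ) ∣ d * w ^ 2 := fun h =>
      (hpZ.dvd_or_dvd h).elim hpd fun h => hw' (hpZ.dvd_of_dvd_pow h)
    obtain ⟨rfl, rfl⟩ := Int.eq_and_eq_of_pow_mul_eq_pow_mul hp hq hdw (hDq.symm.trans hDdw)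
    have hw0 : ((w : ℤ) : ZMod p) ≠ 0 := by
      rwa [Ne, ZMod.intCast_zmod_eq_zero_iff_dvd]
    split_ifs with he hodd
    · rw [Nat.sub_eq_zero_of_le (by omega), pow_zero]
    · exact absurd hodd (by simp)
    · rw [legendreSym.mul, legendreSym.sq_one' p hw0, mul_one, Nat.mul_div_cancel_left k two_pos]

lemma psi_prime_pow_of_pow_dvd (hp2 : p ≠ 2) (hD : IsDiscriminant D) {e : ℕ}
    (h : (p : ℤ) ^ (2 * e) ∣ D) : psi D (p ^ e) = 1 := by
  have hp : p.Prime := Fact.out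
  rcases eq_or_ne D 0 with rfl | h0
  · exact psi_zero _
  obtain ⟨a, q, rfl, hq⟩ := Int.exists_eq_pow_mul_and_not_dvd hp h0
  rw [psi_prime_pow_of_ne_two hp2 hD hq rfl, if_pos ((Int.pow_dvd_pow_mul_iff_le hp hq).1 h)]

lemma psi_prime_pow_congr_of_ne_two (hp2 : p ≠ 2) {D' : ℤ} (hD : IsDiscriminant D)
    (hD' : IsDiscriminant D') {e : ℕ} (h : D ≡ D' [ZMOD p ^ (2 * e)]) :
    psi D (p ^ e) = psi D' (p ^ e) := by
  by_cases hdvd : (p : ℤ) ^ (2 * e) ∣ D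
  · rw [psi_prime_pow_of_pow_dvd hp2 hD hdvd, psi_prime_pow_of_pow_dvd hp2 hD' (h.dvd_iff.1 hdvd)]
  obtain ⟨a, q, q', ha, hq, hq', rfl, rfl, hqq'⟩ :=
    Int.exists_eq_pow_mul_of_modEq Fact.out hdvd h
  have hmod : q % p = q' % p := (hqq'.of_dvd (dvd_pow_self _ (by omega))).eq
  rw [psi_prime_pow_of_ne_two hp2 hD hq rfl, psi_prime_pow_of_ne_two hp2 hD' hq' rfl,
    legendreSym.mod p q, legendreSym.mod p q', hmod]

end OddPrime

lemma Int.mul_sq_emod_four_of_odd (d : ℤ) {w : ℤ} (hw : Odd w) : d * w ^ 2 % 4 = d % 4 := by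
  rw [Int.mul_emod, Int.sq_mod_four_eq_one_of_odd hw, mul_one, Int.emod_emod]

lemma ZMod.χ₈_mul_sq_of_odd (d : ℤ) {w : ℤ} (hw : Odd w) :
    χ₈ ((d * w ^ 2 : ℤ) : ZMod 8) = χ₈ d := by
  have hw2 : χ₈ w ^ 2 = 1 := by
    rw [χ₈_int_eq_if_mod_eight]
    have := Int.odd_iff.1 hw
    split_ifs <;> omega
  push_cast
  rw [map_mul, map_pow, hw2, mul_one]

lemma ZMod.χ₈_four_mul (m : ℤ) : χ₈ ((4 * m : ℤ) : ZMod 8) = 0 := by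
  rw [χ₈_int_eq_if_mod_eight, if_pos (by omega)]

lemma psi_two_pow {D q : ℤ} {a : ℕ} (hD : IsDiscriminant D) (hq : ¬ 2 ∣ q)
    (hDq : D = 2 ^ a * q) (e : ℕ) :
    psi D (2 ^ e) =
      if 2 * e + 2 ≤ a then 1 else if Odd a ∨ q % 4 = 3 then 0 else χ₈ q ^ (e - a / 2) := by
  have h0 : D ≠ 0 := hDq ▸ mul_ne_zero (by positivity) (by rintro rfl; exact hq (dvd_zero _))
  obtain ⟨d, k, w, hd, hw, hDdw, hψ⟩ := exists_psi_prime_pow_eq_kron hD h0 Nat.prime_two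
  have hw' : Odd (w : ℤ) := by exact_mod_cast Nat.odd_iff.2 (Nat.two_dvd_ne_zero.1 hw)
  push_cast at hDdw
  rw [hψ, kron_two_pow]
  -- The three shapes of a fundamental discriminant, `d ≡ 1 (mod 4)`, `d = 8 m₀` with `m₀` odd
  -- and `d = 4 m` with `m ≡ 3 (mod 4)`, give `a = 2k`, `2k + 3` and `2k + 2` respectively.
  rcases hd with ⟨-, hd4⟩ | ⟨m, rfl, -, hm4 | hm4⟩
  · have hdw4 := Int.mul_sq_emod_four_of_odd d hw'
    obtain ⟨rfl, rfl⟩ := Int.eq_and_eq_of_pow_mul_eq_pow_mul Nat.prime_two hq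
      (by push_cast; omega) (hDq.symm.trans hDdw)
    rw [ZMod.χ₈_mul_sq_of_odd d hw']
    split_ifs with he hodd
    · rw [Nat.sub_eq_zero_of_le (by omega), pow_zero]
    · rcases hodd with hodd | hodd
      · exact absurd hodd (by simp)
      · omega
    · rw [Nat.mul_div_cancel_left k two_pos]
  · obtain ⟨m₀, rfl⟩ : ∃ m₀, m = 2 * m₀ := ⟨m / 2, by omega⟩
    have hm₀w := Int.mul_sq_emod_four_of_odd m₀ hw'
    obtain ⟨rfl, -⟩ := Int.eq_and_eq_of_pow_mul_eq_pow_mul Nat.prime_two hq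
      (by push_cast; omega) (hDq.symm.trans (hDdw.trans (by ring)) :
        (2 : ℤ) ^ a * q = 2 ^ (2 * k + 3) * (m₀ * w ^ 2))
    split_ifs with he hodd
    · rw [Nat.sub_eq_zero_of_le (by omega), pow_zero]
    · rw [χ₈_four_mul, zero_pow (by omega)]
    · exact absurd (Or.inl ⟨k + 1, by ring⟩) hodd
  · have hmw := Int.mul_sq_emod_four_of_odd m hw'
    obtain ⟨rfl, rfl⟩ := Int.eq_and_eq_of_pow_mul_eq_pow_mul Nat.prime_two hq
      (by push_cast; omega) (hDq.symm.trans (hDdw.trans (by ring)) :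
        (2 : ℤ) ^ a * q = 2 ^ (2 * k + 2) * (m * w ^ 2))
    split_ifs with he hodd
    · rw [Nat.sub_eq_zero_of_le (by omega), pow_zero]
    · rw [χ₈_four_mul, zero_pow (by omega)]
    · exact absurd (Or.inr (by omega)) hodd

lemma psi_two_pow_of_pow_dvd {D : ℤ} (hD : IsDiscriminant D) {e : ℕ}
    (h : (2 : ℤ) ^ (2 * e + 2) ∣ D) : psi D (2 ^ e) = 1 := by
  rcases eq_or_ne D 0 with rfl | h0
  · exact psi_zero _
  obtain ⟨a, q, rfl, hq⟩ := Int.exists_eq_pow_mul_and_not_dvd Nat.prime_two h0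
  push_cast at hq h
  rw [psi_two_pow hD hq rfl, if_pos ((Int.pow_dvd_pow_mul_iff_le Nat.prime_two hq).1 h)]

lemma psi_two_pow_congr {D D' : ℤ} (hD : IsDiscriminant D) (hD' : IsDiscriminant D') {e : ℕ}
    (h : D ≡ D' [ZMOD 2 ^ (2 * e + 2)]) : psi D (2 ^ e) = psi D' (2 ^ e) := by
  by_cases hdvd : (2 : ℤ) ^ (2 * e + 2) ∣ D
  · rw [psi_two_pow_of_pow_dvd hD hdvd, psi_two_pow_of_pow_dvd hD' (h.dvd_iff.1 hdvd)]
  obtain ⟨a, q, q', ha, hq, hq', rfl, rfl, hqq'⟩ :=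
    Int.exists_eq_pow_mul_of_modEq Nat.prime_two (by exact_mod_cast hdvd) (by exact_mod_cast h)
  push_cast at hq hq' hqq'
  have hlt : ¬ 2 * e + 2 ≤ a := by omega
  rw [psi_two_pow hD hq rfl, psi_two_pow hD' hq' rfl, if_neg hlt, if_neg hlt]
  rcases Nat.even_or_odd a with ⟨j, rfl⟩ | hodd
  · have h4 : q % 4 = q' % 4 := (hqq'.of_dvd (pow_dvd_pow 2 (by omega : 2 ≤ _))).eq
    rw [h4]
    rcases Nat.eq_zero_or_pos (e - (j + j) / 2) with he | he
    · simp only [he, pow_zero]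
    · have h8 : q ≡ q' [ZMOD 2 ^ 3] := hqq'.of_dvd (pow_dvd_pow 2 (by omega))
      rw [(ZMod.intCast_eq_intCast_iff q q' 8).2 h8]
  · simp [hodd]

lemma psi_prime_pow_congr {p : ℕ} (hp : p.Prime) {D D' : ℤ} (hD : IsDiscriminant D)
    (hD' : IsDiscriminant D') {e : ℕ} (h : D ≡ D' [ZMOD 4 * p ^ (2 * e)]) :
    psi D (p ^ e) = psi D' (p ^ e) := by
  rcases eq_or_ne p 2 with rfl | hp2
  · exact psi_two_pow_congr hD hD' (by rwa [pow_add, mul_comm])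
  · have := Fact.mk hp
    exact psi_prime_pow_congr_of_ne_two hp2 hD hD' (h.of_dvd (dvd_mul_left _ _))

lemma psi_congr {D D' : ℤ} (hD : IsDiscriminant D) (hD' : IsDiscriminant D') (m : ℕ)
    (h : D ≡ D' [ZMOD 4 * m ^ 2]) : psi D m = psi D' m := by
  induction m using Nat.recOnPosPrimePosCoprime with
  | prime_pow p e hp _ =>
    exact psi_prime_pow_congr hp hD hD' (by rwa [Nat.cast_pow, ← pow_mul, mul_comm e] at h)
  | zero =>
    have hDD' : D = D' := Int.modEq_zero_iff.1 (by simpa using h)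
    rw [hDD']
  | one => exact psi_prime_pow_congr Nat.prime_two hD hD' (e := 0) (by simpa using h)
  | coprime a b ha hb hab iha ihb =>
    rw [psi_mul D (by omega) (by omega) hab, psi_mul D' (by omega) (by omega) hab,
      iha (h.of_dvd ⟨b ^ 2, by push_cast; ring⟩),
      ihb (h.of_dvd ⟨a ^ 2, by push_cast; ring⟩)]

theorem Finset.sum_range_mul_eq_sum_mul_sum_of_periodic {R : Type*} [CommSemiring R] {A B : ℕ}
    (hA : A ≠ 0) (hB : B ≠ 0) (hAB : A.Coprime B) {f g : ℕ → R} (hf : Function.Periodic f A)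
    (hg : Function.Periodic g B) :
    ∑ n ∈ range (A * B), f n * g n = (∑ n ∈ range A, f n) * ∑ n ∈ range B, g n := by
  rw [sum_mul_sum, ← sum_product']
  refine sum_nbij' (fun n => (n % A, n % B)) (fun x => Nat.chineseRemainder hAB x.1 x.2)
    (fun n _ => ?_) (fun x _ => ?_) (fun n hn => ?_) (fun x hx => ?_)
    (fun n _ => by rw [hf.map_mod_nat, hg.map_mod_nat])
  · simp [Nat.mod_lt, Nat.pos_of_ne_zero hA, Nat.pos_of_ne_zero hB]
  · exact mem_range.2 (Nat.chineseRemainder_lt_mul hAB _ _ hA hB)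
  · obtain ⟨hkA, hkB⟩ := (Nat.chineseRemainder hAB (n % A) (n % B)).2
    exact ((Nat.modEq_and_modEq_iff_modEq_mul hAB).1
      ⟨hkA.trans (Nat.mod_modEq n A), hkB.trans (Nat.mod_modEq n B)⟩).eq_of_lt_of_lt
      (Nat.chineseRemainder_lt_mul hAB _ _ hA hB) (mem_range.1 hn)
  · obtain ⟨hx1, hx2⟩ := mem_product.1 hx
    obtain ⟨hkA, hkB⟩ := (Nat.chineseRemainder hAB x.1 x.2).2
    exact Prod.ext (Eq.trans hkA (Nat.mod_eq_of_lt (mem_range.1 hx1)))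
      (Eq.trans hkB (Nat.mod_eq_of_lt (mem_range.1 hx2)))

noncomputable def psibarSummand (t : ℤ) (m n : ℕ) : ℝ :=
  if Nat.Coprime n m then (psi (t ^ 2 - 4 * n) m : ℝ) else 0

lemma psibar_eq_sum_psibarSummand (t : ℤ) (m : ℕ) :
    psibar t m = (Nat.totient (m ^ 2) : ℝ)⁻¹ * ∑ n ∈ range (m ^ 2), psibarSummand t m n :=
  rfl

lemma psibarSummand_periodic (t : ℤ) (m : ℕ) :
    Function.Periodic (psibarSummand t m) (m ^ 2) := by
  intro n
  have hpsi : psi (t ^ 2 - 4 * ((n + m ^ 2 : ℕ) : ℤ)) m = psi (t ^ 2 - 4 * n) m :=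
    psi_congr (.sq_sub_four_mul _ _) (.sq_sub_four_mul _ _) m
      (Int.modEq_iff_dvd.2 ⟨1, by push_cast; ring⟩)
  have hcop : (n + m ^ 2).Coprime m ↔ n.Coprime m := by
    rw [sq, Nat.coprime_add_mul_right_left]
  simp only [psibarSummand, hpsi, hcop]

lemma psibarSummand_mul (t : ℤ) {m₁ m₂ : ℕ} (hm₁ : m₁ ≠ 0) (hm₂ : m₂ ≠ 0)
    (hcop : m₁.Coprime m₂) (n : ℕ) :
    psibarSummand t (m₁ * m₂) n = psibarSummand t m₁ n * psibarSummand t m₂ n := by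
  simp only [psibarSummand, Nat.coprime_mul_iff_right, psi_mul _ hm₁ hm₂ hcop]
  split_ifs <;> simp_all

/-- For each fixed `t`, the function `m ↦ ψ̄_t(m)` is multiplicative. -/
theorem psibar_multiplicative (t : ℤ) (m₁ m₂ : ℕ) (hm₁ : 0 < m₁) (hm₂ : 0 < m₂)
    (hcop : Nat.Coprime m₁ m₂) :
    psibar t (m₁ * m₂) = psibar t m₁ * psibar t m₂ := by
  have hcop2 : (m₁ ^ 2).Coprime (m₂ ^ 2) := hcop.pow 2 2
  have hsum : ∑ n ∈ range ((m₁ * m₂) ^ 2), psibarSummand t (m₁ * m₂) n =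
      (∑ n ∈ range (m₁ ^ 2), psibarSummand t m₁ n) *
        ∑ n ∈ range (m₂ ^ 2), psibarSummand t m₂ n := by
    simp only [psibarSummand_mul t hm₁.ne' hm₂.ne' hcop, mul_pow]
    exact sum_range_mul_eq_sum_mul_sum_of_periodic (by positivity) (by positivity) hcop2
      (psibarSummand_periodic t m₁) (psibarSummand_periodic t m₂)
  rw [psibar_eq_sum_psibarSummand, psibar_eq_sum_psibarSummand, psibar_eq_sum_psibarSummand, hsum,
    mul_pow, Nat.totient_mul hcop2]
  push_cast
  ring
end

section
/- The infinite product over all primes p of (1 − 1/((p−1)²(p+1)))·(1 + 1/(p²−p−1)) converges and equals ζ(2) = π²/6. Equivalently, C · f(0) = ζ(2), where C = ∏_p (1 − 1/((p−1)²(p+1))) and f(0) = ∏_p (1 + 1/(p²−p−1)). -/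
open scoped Real

/-!
For `x ∉ {0, ±1}` and `x² - x - 1 ≠ 0` one has `(x - 1)²(x + 1) - 1 = x(x² - x - 1)` and
`(x² - x - 1) + 1 = x(x - 1)`, so the two factors multiply to `x² / (x² - 1) = (1 - x⁻²)⁻¹`.
At `x = p` this is the Euler factor of `ζ(2)`, so the product over all primes is the Euler
product `ζ(2) = π² / 6`. Both factors are `1 + O(p⁻²)`, so each product converges on its own
and the product of the two products is the product of the termwise products.
-/

theorem one_sub_one_div_mul_one_add_one_div_eq {x : ℝ} (h₀ : x ≠ 0) (h₁ : x - 1 ≠ 0)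
    (h₂ : x + 1 ≠ 0) (h₃ : x ^ 2 - x - 1 ≠ 0) :
    (1 - 1 / ((x - 1) ^ 2 * (x + 1))) * (1 + 1 / (x ^ 2 - x - 1)) = (1 - (x ^ 2)⁻¹)⁻¹ := by
  have hA : (x - 1) ^ 2 * (x + 1) - 1 = x * (x ^ 2 - x - 1) := by ring
  have hB : x ^ 2 - x - 1 + 1 = x * (x - 1) := by ring
  have hC : 1 - (x ^ 2)⁻¹ = (x - 1) * (x + 1) / x ^ 2 := by field_simp; ring
  rw [one_sub_div (by positivity), one_add_div h₃, hA, hB, hC, inv_div, div_mul_div_comm,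
    div_eq_div_iff (by positivity) (by positivity)]
  ring

theorem eulerProduct_zeta_two_hasProd :
    HasProd (fun p : Nat.Primes => (1 - (((p : ℕ) : ℝ) ^ 2)⁻¹)⁻¹) (π ^ 2 / 6) := by
  have hζ : HasSum (fun n : ℕ => ((n : ℝ) ^ 2)⁻¹) (π ^ 2 / 6) := by
    simpa only [one_div] using hasSum_zeta_two
  let f : ℕ →*₀ ℝ := invMonoidWithZeroHom.comp
    ((powMonoidWithZeroHom two_ne_zero).comp (Nat.castRingHom ℝ).toMonoidWithZeroHom)
  have hf : Summable (‖f ·‖) := hζ.summable.congr fun n => by simp [f, invMonoidWithZeroHom]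
  exact hζ.tsum_eq ▸ EulerProduct.eulerProduct_completely_multiplicative_hasProd hf

theorem summable_primes_of_le_div_sq {f : Nat.Primes → ℝ} (C : ℝ) (hf₀ : ∀ p, 0 ≤ f p)
    (hf : ∀ p : Nat.Primes, f p ≤ C / ((p : ℕ) : ℝ) ^ 2) : Summable f := by
  refine .of_nonneg_of_le hf₀ hf ((?_ : Summable fun n : ℕ => C / (n : ℝ) ^ 2).comp_injective
    Nat.Primes.coe_nat_injective)
  simpa only [div_eq_mul_inv] using (Real.summable_nat_pow_inv.2 one_lt_two).mul_left C

section

variable {x : ℝ}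

theorem one_div_sub_one_sq_mul_add_one_le (hx : 2 ≤ x) :
    1 / ((x - 1) ^ 2 * (x + 1)) ≤ 4 / x ^ 2 := by
  rw [div_le_div_iff₀ (by nlinarith) (by positivity)]
  nlinarith [sq_nonneg (x - 2)]

theorem one_div_sq_sub_sub_one_le (hx : 2 ≤ x) : 1 / (x ^ 2 - x - 1) ≤ 4 / x ^ 2 := by
  rw [div_le_div_iff₀ (by nlinarith) (by positivity)]
  nlinarith

end

theorem Nat.Primes.two_le_cast (p : Nat.Primes) : (2 : ℝ) ≤ (p : ℕ) := by
  exact_mod_cast p.2.two_le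

theorem summable_primes_one_div_sub_one_sq_mul_add_one :
    Summable fun p : Nat.Primes => 1 / ((((p : ℕ) : ℝ) - 1) ^ 2 * (((p : ℕ) : ℝ) + 1)) :=
  summable_primes_of_le_div_sq 4
    (fun p => by have := p.two_le_cast; positivity)
    (fun p => one_div_sub_one_sq_mul_add_one_le p.two_le_cast)

theorem summable_primes_one_div_sq_sub_sub_one :
    Summable fun p : Nat.Primes => 1 / (((p : ℕ) : ℝ) ^ 2 - ((p : ℕ) : ℝ) - 1) :=
  summable_primes_of_le_div_sq 4
    (fun p => by have := p.two_le_cast; exact one_div_nonneg.2 (by nlinarith))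
    (fun p => one_div_sq_sub_sub_one_le p.two_le_cast)

/-- The infinite product over all primes of `(1 - 1/((p-1)²(p+1)))(1 + 1/(p²-p-1))` converges
and equals `ζ(2) = π²/6`; equivalently `C·f(0) = ζ(2)` where `C = ∏_p (1 - 1/((p-1)²(p+1)))`
and `f(0) = ∏_p (1 + 1/(p²-p-1))`. -/
theorem prod_C_mul_f_zero_eq_zeta_two :
    Multipliable (fun p : Nat.Primes =>
      (1 - 1 / ((((p : ℕ) : ℝ) - 1) ^ 2 * (((p : ℕ) : ℝ) + 1))) *
        (1 + 1 / (((p : ℕ) : ℝ) ^ 2 - ((p : ℕ) : ℝ) - 1))) ∧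
    (∏' p : Nat.Primes,
      (1 - 1 / ((((p : ℕ) : ℝ) - 1) ^ 2 * (((p : ℕ) : ℝ) + 1))) *
        (1 + 1 / (((p : ℕ) : ℝ) ^ 2 - ((p : ℕ) : ℝ) - 1))) = π ^ 2 / 6 ∧
    (∏' p : Nat.Primes, (1 - 1 / ((((p : ℕ) : ℝ) - 1) ^ 2 * (((p : ℕ) : ℝ) + 1)))) *
      (∏' p : Nat.Primes, (1 + 1 / (((p : ℕ) : ℝ) ^ 2 - ((p : ℕ) : ℝ) - 1))) = π ^ 2 / 6 := by
  have hprod := eulerProduct_zeta_two_hasProd.congr_fun fun p => by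
    have hp := p.two_le_cast
    exact one_sub_one_div_mul_one_add_one_div_eq (by positivity) (by linarith) (by linarith)
      (by nlinarith)
  have hC := Real.multipliable_one_add_of_summable
    summable_primes_one_div_sub_one_sq_mul_add_one.neg
  have hf := Real.multipliable_one_add_of_summable summable_primes_one_div_sq_sub_sub_one
  simp only [← sub_eq_add_neg] at hC
  refine ⟨hprod.multipliable, hprod.tprod_eq, ?_⟩
  rw [← hC.tprod_mul hf, hprod.tprod_eq]
end

section
/- Let h > 0 be real, k₀ ∈ ℤ, and φ ∈ ℝ. Then Σ_{k ∈ k₀+4ℤ} cos((k−1)φ) · W((k−k₀)/(4h)) = h · cos((k₀−1)φ) · Σ_{ℓ∈ℤ} Ŵ(hℓ + 2hφ/π), where the left-hand sum is over all integers k ≡ k₀ (mod 4) (a finite sum, since W has compact support) and the right-hand sum converges absolutely. -/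
open scoped BigOperators Real

/-- The Fourier transform `Ŵ(y) = ∫_ℝ W(u) e^{-2πiuy} du` of the weight function. -/
noncomputable def What (W : ℝ → ℝ) (y : ℝ) : ℂ :=
  ∫ u : ℝ, (W u : ℂ) * Complex.exp (-(2 * (π : ℂ) * Complex.I * u * y))

/-- A smooth compactly supported function is a Schwartz function. -/
noncomputable def toSchwartz (f : ℝ → ℂ) (hf : ContDiff ℝ (⊤ : ℕ∞) f) (hc : HasCompactSupport f) :
    SchwartzMap ℝ ℂ where
  toFun := f
  smooth' := hf.of_le (by simp)
  decay' := by
    intro k n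
    have hd : Continuous fun x : ℝ => ‖x‖ ^ k * ‖iteratedFDeriv ℝ n f x‖ :=
      (continuous_norm.pow k).mul (hf.continuous_iteratedFDeriv (by exact_mod_cast le_top)).norm
    have hcs : HasCompactSupport fun x : ℝ => ‖x‖ ^ k * ‖iteratedFDeriv ℝ n f x‖ :=
      HasCompactSupport.mul_left (hc.iteratedFDeriv n).norm
    obtain ⟨x₀, hx₀⟩ := hd.exists_forall_ge_of_hasCompactSupport hcs
    exact ⟨_, hx₀⟩

@[simp] lemma toSchwartz_coe (f : ℝ → ℂ) (hf : ContDiff ℝ (⊤ : ℕ∞) f) (hc : HasCompactSupport f) :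
    ⇑(toSchwartz f hf hc) = f := rfl

/-- Poisson summation for the smoothed sum over weights: for `h > 0`, `k₀ ∈ ℤ` and `φ ∈ ℝ`,
`Σ_{k ≡ k₀ (4)} cos((k-1)φ) W((k-k₀)/(4h)) = h cos((k₀-1)φ) Σ_{ℓ ∈ ℤ} Ŵ(hℓ + 2hφ/π)`,
the right-hand series converging absolutely. -/
theorem poisson_weight_sum (W : ℝ → ℝ) (hsmooth : ContDiff ℝ (⊤ : ℕ∞) W)
    (heven : ∀ x, W (-x) = W x) (hnonneg : ∀ x, 0 ≤ W x)
    (hsupp : ∀ x : ℝ, 1 < |x| → W x = 0)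
    (hpart : ∀ x ∈ Set.Icc (0 : ℝ) 1, W x + W (1 - x) = 1)
    (h : ℝ) (hh : 0 < h) (k₀ : ℤ) (φ : ℝ) :
    Summable (fun ℓ : ℤ => ‖What W (h * ℓ + 2 * h * φ / π)‖) ∧
    ((∑' m : ℤ, Real.cos ((((k₀ : ℝ) + 4 * m) - 1) * φ) * W ((m : ℝ) / h) : ℝ) : ℂ) =
      (h : ℂ) * (Real.cos (((k₀ : ℝ) - 1) * φ) : ℝ) *
        ∑' ℓ : ℤ, What W (h * ℓ + 2 * h * φ / π) := by
    classical
  have hπ : (π : ℝ) ≠ 0 := Real.pi_ne_zero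
  set a : ℝ := 4 * φ with ha
  set c : ℝ := 2 * h * φ / π with hc
  -- the function to which we apply Poisson summation
  set f : ℝ → ℂ := fun x => (W (x / h) : ℂ) * Complex.exp (-((a * x : ℝ) : ℂ) * Complex.I)
    with hf_def
  have hWsmooth : ContDiff ℝ (⊤ : ℕ∞) fun x : ℝ => ((W (x / h) : ℝ) : ℂ) :=
    Complex.ofRealCLM.contDiff.comp (hsmooth.comp (contDiff_id.div_const h))
  have hf_smooth : ContDiff ℝ (⊤ : ℕ∞) f := by
    apply hWsmooth.mul
    have hlin : ContDiff ℝ (⊤ : ℕ∞) fun x : ℝ => -((a * x : ℝ) : ℂ) * Complex.I := by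
      have : (fun x : ℝ => -((a * x : ℝ) : ℂ) * Complex.I) =
          fun x : ℝ => (-(a : ℂ) * Complex.I) * (Complex.ofRealCLM x) := by
        funext x
        simp only [Complex.ofRealCLM_apply]
        push_cast
        ring
      rw [this]
      exact contDiff_const.mul Complex.ofRealCLM.contDiff
    exact hlin.cexp
  have hWz : ∀ x : ℝ, h < |x| → W (x / h) = 0 := by
    intro x hx
    apply hsupp
    rw [abs_div, abs_of_pos hh]
    exact (one_lt_div hh).mpr hx
  have hf_supp : HasCompactSupport f := by
    apply HasCompactSupport.intro (isCompact_Icc (a := -h) (b := h))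
    intro x hx
    have : h < |x| := by
      simp only [Set.mem_Icc, not_and_or, not_le] at hx
      rcases hx with hx | hx
      · rw [abs_of_neg (by linarith)]; linarith
      · rw [abs_of_pos (by linarith)]; linarith
    simp only [hf_def, hWz x this, Complex.ofReal_zero, zero_mul]
  set fS : SchwartzMap ℝ ℂ := toSchwartz f hf_smooth hf_supp with hfS
  -- computation of the Fourier transform of f
  have hFf : ∀ ξ : ℝ, FourierTransform.fourier f ξ = (h : ℂ) * What W (h * ξ + c) := by
    intro ξ
    set β : ℝ := 2 * π * ξ + a with hβ
    set G : ℝ → ℂ := fun v => (W (v / h) : ℂ) * Complex.exp (((-(β * v) : ℝ) : ℂ) * Complex.I)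
      with hG
    have h1 : FourierTransform.fourier f ξ = ∫ v : ℝ, G v := by
      rw [Real.fourier_real_eq_integral_exp_smul]
      congr 1
      funext v
      simp only [hf_def, hG, smul_eq_mul]
      have harg : (((-2 * π * v * ξ : ℝ) : ℂ) * Complex.I) + (-((a * v : ℝ) : ℂ) * Complex.I)
          = ((-(β * v) : ℝ) : ℂ) * Complex.I := by
        rw [hβ, ha]
        push_cast
        ring
      rw [mul_left_comm, ← Complex.exp_add, harg]
    have h2 : (∫ v : ℝ, G v) = (h : ℂ) * ∫ u : ℝ, G (h * u) := by
      have h2' := MeasureTheory.Measure.integral_comp_mul_left G h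
      rw [abs_inv, abs_of_pos hh] at h2'
      rw [h2', Complex.real_smul, ← mul_assoc, ← Complex.ofReal_mul,
        mul_inv_cancel₀ hh.ne', Complex.ofReal_one, one_mul]
    have h3 : (∫ u : ℝ, G (h * u)) = What W (h * ξ + c) := by
      rw [What]
      congr 1
      funext u
      have e1 : h * u / h = u := by field_simp
      have hr : (β * (h * u) : ℝ) = 2 * π * u * (h * ξ + c) := by
        simp only [hβ, ha, hc]
        field_simp
        ring
      simp only [hG, e1]
      have harg : ((-(β * (h * u)) : ℝ) : ℂ) * Complex.I
          = -(2 * (π : ℂ) * Complex.I * (u : ℂ) * ((h * ξ + c : ℝ) : ℂ)) := by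
        rw [show (-(β * (h * u)) : ℝ) = -(2 * π * u * (h * ξ + c)) by rw [hr]]
        push_cast
        ring
      rw [harg]
    rw [h1, h2, h3]
  -- summability of the Fourier transform along ℤ
  have hgsum : Summable fun n : ℤ => ‖FourierTransform.fourier f n‖ := by
    have hO := (SchwartzMap.fourierTransformCLM ℝ fS).isBigO_cocompact_rpow (-2)
    have hO' : (fun n : ℤ => ‖(SchwartzMap.fourierTransformCLM ℝ fS) n‖)
        =O[Filter.cofinite] fun n : ℤ => |(n : ℝ)| ^ (-2 : ℝ) :=
      (hO.norm_left.comp_tendsto Int.tendsto_coe_cofinite)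
    have := summable_of_isBigO (Real.summable_abs_int_rpow one_lt_two) hO'
    refine this.congr fun n => ?_
    rw [SchwartzMap.fourierTransformCLM_apply, SchwartzMap.fourier_coe, toSchwartz_coe]
  have hsummable : Summable fun ℓ : ℤ => ‖What W (h * ℓ + c)‖ := by
    refine (hgsum.mul_left (h⁻¹)).congr fun n => ?_
    rw [hFf n, norm_mul, Complex.norm_real, Real.norm_eq_abs, abs_of_pos hh, ← mul_assoc,
      inv_mul_cancel₀ hh.ne', one_mul]
  refine ⟨hsummable, ?_⟩
  -- finite-support summability facts
  have hfin : ∀ g : ℤ → ℝ, (∀ m : ℤ, W ((m : ℝ) / h) = 0 → g m = 0) → Summable g := by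
    intro g hg
    apply summable_of_finite_support
    apply Set.Finite.subset (Set.finite_Icc (-⌈h⌉) ⌈h⌉)
    intro m hm
    simp only [Function.mem_support] at hm
    by_contra hmem
    apply hm
    apply hg
    apply hWz
    simp only [Set.mem_Icc, not_and_or, not_le] at hmem
    have hch : h ≤ (⌈h⌉ : ℝ) := Int.le_ceil h
    rcases hmem with h1 | h1
    · have : ((m : ℝ)) < -(⌈h⌉ : ℝ) := by exact_mod_cast (by push_cast; exact_mod_cast h1 : (m:ℝ) < (-⌈h⌉ : ℤ))
      rw [abs_of_neg (by linarith)]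
      linarith
    · have : ((⌈h⌉ : ℝ)) < (m : ℝ) := by exact_mod_cast h1
      rw [abs_of_pos (by linarith)]
      linarith
  have hWeven : ∀ m : ℤ, W (((-m : ℤ) : ℝ) / h) = W ((m : ℝ) / h) := by
    intro m
    push_cast
    rw [neg_div, heven]
  -- odd part vanishes
  have hodd : (∑' m : ℤ, Real.sin (4 * (m : ℝ) * φ) * W ((m : ℝ) / h)) = 0 := by
    set v : ℤ → ℝ := fun m => Real.sin (4 * (m : ℝ) * φ) * W ((m : ℝ) / h) with hv
    have h1 := (Equiv.neg ℤ).tsum_eq v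
    have h2 : ∀ m : ℤ, v ((Equiv.neg ℤ) m) = -v m := by
      intro m
      simp only [hv, Equiv.neg_apply]
      rw [hWeven]
      push_cast
      rw [show 4 * (-(m : ℝ)) * φ = -(4 * (m : ℝ) * φ) by ring, Real.sin_neg]
      ring
    rw [tsum_congr h2, tsum_neg] at h1
    linarith [h1]
  have hu : Summable fun m : ℤ => Real.cos (4 * (m : ℝ) * φ) * W ((m : ℝ) / h) :=
    hfin _ fun m hm => by rw [hm, mul_zero]
  have hv : Summable fun m : ℤ => Real.sin (4 * (m : ℝ) * φ) * W ((m : ℝ) / h) :=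
    hfin _ fun m hm => by rw [hm, mul_zero]
  set A : ℝ := ((k₀ : ℝ) - 1) * φ with hA
  -- reduce the left-hand side to the even cosine sum
  have hLHS : (∑' m : ℤ, Real.cos ((((k₀ : ℝ) + 4 * m) - 1) * φ) * W ((m : ℝ) / h))
      = Real.cos A * ∑' m : ℤ, Real.cos (4 * (m : ℝ) * φ) * W ((m : ℝ) / h) := by
    have hterm : ∀ m : ℤ, Real.cos ((((k₀ : ℝ) + 4 * m) - 1) * φ) * W ((m : ℝ) / h)
        = Real.cos A * (Real.cos (4 * (m : ℝ) * φ) * W ((m : ℝ) / h))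
          - Real.sin A * (Real.sin (4 * (m : ℝ) * φ) * W ((m : ℝ) / h)) := by
      intro m
      have : (((k₀ : ℝ) + 4 * m) - 1) * φ = A + 4 * (m : ℝ) * φ := by rw [hA]; ring
      rw [this, Real.cos_add]
      ring
    rw [tsum_congr hterm, Summable.tsum_sub (hu.mul_left _) (hv.mul_left _), tsum_mul_left, tsum_mul_left,
      hodd, mul_zero, sub_zero]
  -- the even cosine sum equals the sum of f over ℤ
  have hf_summable : Summable fun m : ℤ => f m := by
    apply summable_of_finite_support
    have hsub : Function.support (fun m : ℤ => f m) ⊆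
        Function.support (fun m : ℤ => W ((m : ℝ) / h)) := by
      intro m hm
      simp only [Function.mem_support] at hm ⊢
      intro hW0
      apply hm
      simp only [hf_def, hW0, Complex.ofReal_zero, zero_mul]
    apply Set.Finite.subset ?_ hsub
    have := hfin (fun m : ℤ => W ((m : ℝ) / h)) (fun m hm => hm)
    -- extract finiteness directly instead
    apply Set.Finite.subset (Set.finite_Icc (-⌈h⌉) ⌈h⌉)
    intro m hm
    simp only [Function.mem_support] at hm
    by_contra hmem
    apply hm
    apply hWz
    simp only [Set.mem_Icc, not_and_or, not_le] at hmem
    have hch : h ≤ (⌈h⌉ : ℝ) := Int.le_ceil h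
    rcases hmem with h1 | h1
    · have : ((m : ℝ)) < -(⌈h⌉ : ℝ) := by exact_mod_cast (by push_cast; exact_mod_cast h1 : (m:ℝ) < (-⌈h⌉ : ℤ))
      rw [abs_of_neg (by linarith)]
      linarith
    · have : ((⌈h⌉ : ℝ)) < (m : ℝ) := by exact_mod_cast h1
      rw [abs_of_pos (by linarith)]
      linarith
  have hpair : ∀ x : ℝ, f x + f (-x) = 2 * ((Real.cos (a * x) * W (x / h) : ℝ) : ℂ) := by
    intro x
    simp only [hf_def]
    rw [show (-x) / h = -(x / h) by ring, heven (x / h), ← mul_add]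
    have h2c : Complex.exp (-((a * x : ℝ) : ℂ) * Complex.I)
          + Complex.exp (-((a * (-x) : ℝ) : ℂ) * Complex.I)
        = 2 * Complex.cos ((a * x : ℝ) : ℂ) := by
      rw [Complex.two_cos]
      push_cast
      ring_nf
    rw [h2c, ← Complex.ofReal_cos]
    push_cast
    ring
  have hEven : ((∑' m : ℤ, Real.cos (4 * (m : ℝ) * φ) * W ((m : ℝ) / h) : ℝ) : ℂ)
      = ∑' m : ℤ, f m := by
    have hfneg : Summable fun m : ℤ => f (-(m : ℝ)) := by
      have h' := ((Equiv.neg ℤ).summable_iff (f := fun m : ℤ => f m)).mpr hf_summable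
      refine h'.congr fun m => ?_
      simp [Equiv.neg_apply]
    have h1 : (∑' m : ℤ, f (-(m : ℝ))) = ∑' m : ℤ, f m := by
      rw [← (Equiv.neg ℤ).tsum_eq (fun m : ℤ => f m)]
      exact tsum_congr fun m => by simp [Equiv.neg_apply]
    have h2 : ∀ m : ℤ, f m + f (-(m : ℝ))
        = 2 * ((Real.cos (4 * (m : ℝ) * φ) * W ((m : ℝ) / h) : ℝ) : ℂ) := by
      intro m
      have hp := hpair (m : ℝ)
      rw [show a * (m : ℝ) = 4 * (m : ℝ) * φ by rw [ha]; ring] at hp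
      exact hp
    have h3 : (∑' m : ℤ, (f m + f (-(m : ℝ)))) = (∑' m : ℤ, f m) + ∑' m : ℤ, f (-(m : ℝ)) :=
      Summable.tsum_add hf_summable hfneg
    rw [h1] at h3
    rw [tsum_congr h2, tsum_mul_left] at h3
    rw [Complex.ofReal_tsum]
    have h5 : (2 : ℂ) * (∑' m : ℤ, ((Real.cos (4 * (m : ℝ) * φ) * W ((m : ℝ) / h) : ℝ) : ℂ))
        = 2 * ∑' m : ℤ, f m := by rw [h3]; ring
    have h6 := mul_left_cancel₀ (two_ne_zero' ℂ) h5
    push_cast at h6 ⊢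
    exact h6
  -- Poisson summation
  have hPoisson : (∑' m : ℤ, f m) = ∑' n : ℤ, FourierTransform.fourier f n := by
    have hP := fS.tsum_eq_tsum_fourier 0
    simp only [zero_add] at hP
    have hz : ((0 : ℝ) : UnitAddCircle) = (0 : UnitAddCircle) := by norm_cast
    rw [hz] at hP
    simp only [fourier_eval_zero, mul_one, SchwartzMap.fourierTransformCLM_apply, SchwartzMap.fourier_coe, hfS,
      toSchwartz_coe] at hP
    exact hP
  -- assemble
  rw [hLHS, Complex.ofReal_mul, hEven, hPoisson]
  rw [tsum_congr fun n : ℤ => hFf n, tsum_mul_left]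
  ring
end
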